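/- Let 𝒜 : X × X → ℝ and ℬ : X × Q → ℝ satisfy the hypotheses of the Brezzi theorem (𝒜 continuous and coercive on X₀ = ker B with constant β_𝒜, ℬ continuous with norm ‖ℬ‖ and inf-sup constant β_ℬ). Then the solution (x,z) of the saddle point problem 𝒜(x,ξ)+ℬ(ξ,z)=⟨F,ξ⟩, ℬ(x,ζ)=⟨G,ζ⟩ depends continuously on the data: there exist constants c₁,c₂ depending only on β_𝒜, β_ℬ, ‖𝒜‖, ‖ℬ‖ such that ‖x‖_X ≤ c₁(‖F‖_{X*} + ‖G‖_{Q*}) and ‖z‖_Q ≤ c₂(‖F‖_{X*} + ‖G‖_{Q*}). -/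

import Mathlib

/-!
Split `x = x₀ + x₁` along `ker B ⊕ (ker B)ᗮ`. With `T ζ` the Riesz representative of
`B (·) ζ`, one has `ker B = (range T)ᗮ`, so `(ker B)ᗮ` is the closure of `range T`. For
`u = T w`, `‖u‖² = B u w`, and the inf-sup condition `βB ‖w‖ ≤ ‖u‖` turns this into
`βB ‖u‖ ≤ ‖B u‖`; this closed condition passes to `(ker B)ᗮ` and gives `βB ‖x₁‖ ≤ ‖G‖`.
Testing the first equation with `x₀` and using coercivity on `ker B` bounds `x₀`.
Finally `B (·) z = F - A x`, so the inf-sup condition bounds `z`.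
-/

open InnerProductSpace RealInnerProductSpace

namespace ContinuousLinearMap

variable {X Q : Type*} [NormedAddCommGroup X] [InnerProductSpace ℝ X] [CompleteSpace X]
  [NormedAddCommGroup Q] [NormedSpace ℝ Q]

noncomputable def rieszFlip (B : X →L[ℝ] Q →L[ℝ] ℝ) : Q →L[ℝ] X :=
  (toDual ℝ X).symm.toContinuousLinearEquiv.toContinuousLinearMap.comp B.flip

variable (B : X →L[ℝ] Q →L[ℝ] ℝ)

theorem inner_rieszFlip (ζ : Q) (ξ : X) : ⟪B.rieszFlip ζ, ξ⟫ = B ξ ζ := by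
  simp [rieszFlip, toDual_symm_apply]

theorem norm_rieszFlip (ζ : Q) : ‖B.rieszFlip ζ‖ = ‖B.flip ζ‖ := by
  simp [rieszFlip]

theorem ker_eq_orthogonal_range_rieszFlip : B.ker = B.rieszFlip.rangeᗮ := by
  ext v
  simp [Submodule.mem_orthogonal, ContinuousLinearMap.ext_iff, inner_rieszFlip]

theorem orthogonal_ker_eq_closure_range_rieszFlip :
    B.kerᗮ = (B.rieszFlip.range).topologicalClosure := by
  rw [ker_eq_orthogonal_range_rieszFlip, Submodule.orthogonal_orthogonal_eq_closure]

variable {B} {β : ℝ} (hβ : 0 ≤ β) (hinfsup : ∀ ζ : Q, β * ‖ζ‖ ≤ ‖B.flip ζ‖)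
include hβ hinfsup

theorem mul_norm_rieszFlip_le (w : Q) : β * ‖B.rieszFlip w‖ ≤ ‖B (B.rieszFlip w)‖ := by
  set u := B.rieszFlip w
  rcases (norm_nonneg u).eq_or_lt with hu | hu
  · simp [← hu]
  have hsq : ‖u‖ ^ 2 ≤ ‖B u‖ * ‖w‖ := by
    rw [← real_inner_self_eq_norm_sq, inner_rieszFlip]
    exact (le_abs_self _).trans ((B u).le_opNorm w)
  have hw : β * ‖w‖ ≤ ‖u‖ := norm_rieszFlip B w ▸ hinfsup w
  refine le_of_mul_le_mul_right ?_ hu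
  calc β * ‖u‖ * ‖u‖ = β * ‖u‖ ^ 2 := by ring
    _ ≤ β * (‖B u‖ * ‖w‖) := by gcongr
    _ = ‖B u‖ * (β * ‖w‖) := by ring
    _ ≤ ‖B u‖ * ‖u‖ := by gcongr

theorem mul_norm_le_of_mem_orthogonal_ker {u : X} (hu : u ∈ B.kerᗮ) : β * ‖u‖ ≤ ‖B u‖ := by
  rw [orthogonal_ker_eq_closure_range_rieszFlip, ← SetLike.mem_coe,
    Submodule.topologicalClosure_coe] at hu
  have hclosed : IsClosed {u : X | β * ‖u‖ ≤ ‖B u‖} := isClosed_le (by fun_prop) (by fun_prop)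
  refine closure_minimal ?_ hclosed hu
  rintro _ ⟨w, rfl⟩
  exact mul_norm_rieszFlip_le hβ hinfsup w

end ContinuousLinearMap

section SaddlePoint

open ContinuousLinearMap

variable {X Q : Type*} [NormedAddCommGroup X] [NormedSpace ℝ X]
  [NormedAddCommGroup Q] [NormedSpace ℝ Q] (A : X →L[ℝ] X →L[ℝ] ℝ)

theorem mul_norm_le_of_coercive {βA : ℝ} {F : X →L[ℝ] ℝ} {x₀ x₁ : X}
    (hcoer : βA * ‖x₀‖ ^ 2 ≤ A x₀ x₀) (hF : A (x₀ + x₁) x₀ = F x₀) :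
    βA * ‖x₀‖ ≤ ‖F‖ + ‖A‖ * ‖x₁‖ := by
  rcases (norm_nonneg x₀).eq_or_lt with h0 | h0
  · simp only [← h0, mul_zero]
    positivity
  have hF₀ : F x₀ ≤ ‖F‖ * ‖x₀‖ := (le_abs_self _).trans (F.le_opNorm x₀)
  have hA₁ : -A x₁ x₀ ≤ ‖A‖ * ‖x₁‖ * ‖x₀‖ := (neg_le_abs _).trans (A.le_opNorm₂ x₁ x₀)
  rw [map_add, add_apply] at hF
  refine le_of_mul_le_mul_right ?_ h0
  calc βA * ‖x₀‖ * ‖x₀‖ = βA * ‖x₀‖ ^ 2 := by ring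
    _ ≤ A x₀ x₀ := hcoer
    _ = F x₀ - A x₁ x₀ := by linarith
    _ ≤ (‖F‖ + ‖A‖ * ‖x₁‖) * ‖x₀‖ := by linarith

theorem mul_norm_le_of_saddlePoint_right (B : X →L[ℝ] Q →L[ℝ] ℝ) {βB : ℝ}
    (hinfsup : ∀ ζ : Q, βB * ‖ζ‖ ≤ ‖B.flip ζ‖) {F : X →L[ℝ] ℝ} {x : X} {z : Q}
    (hF : ∀ ξ : X, A x ξ + B ξ z = F ξ) :
    βB * ‖z‖ ≤ ‖F‖ + ‖A‖ * ‖x‖ := by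
  have hBz : B.flip z = F - A x := by
    ext ξ
    simp [← hF ξ]
  calc βB * ‖z‖ ≤ ‖F - A x‖ := hBz ▸ hinfsup z
    _ ≤ ‖F‖ + ‖A x‖ := norm_sub_le _ _
    _ ≤ ‖F‖ + ‖A‖ * ‖x‖ := by gcongr; exact A.le_opNorm x

end SaddlePoint

theorem norm_le_of_saddlePoint_left {X Q : Type*} [NormedAddCommGroup X] [InnerProductSpace ℝ X]
    [CompleteSpace X] [NormedAddCommGroup Q] [NormedSpace ℝ Q]
    (A : X →L[ℝ] X →L[ℝ] ℝ) (B : X →L[ℝ] Q →L[ℝ] ℝ) {βA βB : ℝ} (hβA : 0 < βA) (hβB : 0 < βB)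
    (hAcoer : ∀ x ∈ B.ker, βA * ‖x‖ ^ 2 ≤ A x x)
    (hinfsup : ∀ ζ : Q, βB * ‖ζ‖ ≤ ‖B.flip ζ‖) {F : X →L[ℝ] ℝ} {G : Q →L[ℝ] ℝ} {x : X}
    (hF : ∀ ξ ∈ B.ker, A x ξ = F ξ) (hG : B x = G) :
    ‖x‖ ≤ ((1 + ‖A‖ / βB) / βA + 1 / βB) * (‖F‖ + ‖G‖) := by
  obtain ⟨x₀, hx₀, x₁, hx₁, rfl⟩ := B.ker.exists_add_mem_mem_orthogonal x
  have hBx₁ : B x₁ = G := by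
    rw [← hG, map_add, (by simpa using hx₀ : B x₀ = 0), zero_add]
  have h₁ : ‖x₁‖ ≤ ‖G‖ / βB := by
    rw [le_div_iff₀' hβB, ← hBx₁]
    exact B.mul_norm_le_of_mem_orthogonal_ker hβB.le hinfsup hx₁
  have h₀ : ‖x₀‖ ≤ (‖F‖ + ‖A‖ * (‖G‖ / βB)) / βA := by
    rw [le_div_iff₀' hβA]
    refine (mul_norm_le_of_coercive A (hAcoer x₀ hx₀) (hF x₀ hx₀)).trans ?_
    gcongr
  calc ‖x₀ + x₁‖ ≤ (‖F‖ + ‖A‖ * (‖G‖ / βB)) / βA + ‖G‖ / βB :=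
        (norm_add_le _ _).trans (add_le_add h₀ h₁)
    _ ≤ _ := by
      rw [show ((1 + ‖A‖ / βB) / βA + 1 / βB) * (‖F‖ + ‖G‖) =
        (‖F‖ + ‖A‖ * (‖G‖ / βB)) / βA + ‖G‖ / βB + (‖G‖ / βA + ‖A‖ * ‖F‖ / (βB * βA) + ‖F‖ / βB)
        by field_simp; ring]
      exact le_add_of_nonneg_right (by positivity)

theorem brezzi_stability_general
    {X Q : Type*} [NormedAddCommGroup X] [InnerProductSpace ℝ X] [CompleteSpace X]
    [NormedAddCommGroup Q] [InnerProductSpace ℝ Q]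
    (A : X →L[ℝ] X →L[ℝ] ℝ) (B : X →L[ℝ] Q →L[ℝ] ℝ)
    (βA : ℝ) (hβA : 0 < βA)
    (hAcoer : ∀ x : X, (∀ ζ : Q, B x ζ = 0) → βA * ‖x‖ ^ 2 ≤ A x x)
    (βB : ℝ) (hβB : 0 < βB)
    (hinfsup : ∀ ζ : Q, βB * ‖ζ‖ ≤ ‖B.flip ζ‖) :
    ∃ c₁ c₂ : ℝ, 0 < c₁ ∧ 0 < c₂ ∧
      ∀ (F : X →L[ℝ] ℝ) (G : Q →L[ℝ] ℝ) (x : X) (z : Q),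
        (∀ ξ : X, A x ξ + B ξ z = F ξ) → (∀ ζ : Q, B x ζ = G ζ) →
          ‖x‖ ≤ c₁ * (‖F‖ + ‖G‖) ∧ ‖z‖ ≤ c₂ * (‖F‖ + ‖G‖) := by
  set c₁ := (1 + ‖A‖ / βB) / βA + 1 / βB
  refine ⟨c₁, (1 + ‖A‖ * c₁) / βB, by positivity, by positivity, fun F G x z hF hG => ?_⟩
  have hker : ∀ ξ ∈ B.ker, ∀ ζ : Q, B ξ ζ = 0 := fun ξ hξ ζ => by
    rw [(by simpa using hξ : B ξ = 0), zero_apply]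
  have hx : ‖x‖ ≤ c₁ * (‖F‖ + ‖G‖) :=
    norm_le_of_saddlePoint_left A B hβA hβB (fun ξ hξ => hAcoer ξ (hker ξ hξ)) hinfsup
      (fun ξ hξ => by rw [← hF ξ, hker ξ hξ, add_zero]) (ContinuousLinearMap.ext hG)
  have hz := mul_norm_le_of_saddlePoint_right A B hinfsup hF
  refine ⟨hx, ?_⟩
  rw [div_mul_eq_mul_div, le_div_iff₀' hβB]
  linarith [norm_nonneg G, mul_le_mul_of_nonneg_left hx (norm_nonneg A)]

/-- Stability estimate for the Brezzi saddle point problem: the solution depends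
continuously on the data `F`, `G`, with constants depending only on the constants of
the forms `𝒜` and `ℬ`. -/
theorem brezzi_stability
    {X Q : Type*} [NormedAddCommGroup X] [InnerProductSpace ℝ X] [CompleteSpace X]
    [NormedAddCommGroup Q] [InnerProductSpace ℝ Q] [CompleteSpace Q]
    (A : X →L[ℝ] X →L[ℝ] ℝ) (B : X →L[ℝ] Q →L[ℝ] ℝ)
    (hAsymm : ∀ x ξ : X, A x ξ = A ξ x)
    (βA : ℝ) (hβA : 0 < βA)
    (hAcoer : ∀ x : X, (∀ ζ : Q, B x ζ = 0) → βA * ‖x‖ ^ 2 ≤ A x x)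
    (βB : ℝ) (hβB : 0 < βB)
    (hinfsup : ∀ ζ : Q, βB * ‖ζ‖ ≤ ‖B.flip ζ‖) :
    ∃ c₁ c₂ : ℝ, 0 < c₁ ∧ 0 < c₂ ∧
      ∀ (F : X →L[ℝ] ℝ) (G : Q →L[ℝ] ℝ) (x : X) (z : Q),
        (∀ ξ : X, A x ξ + B ξ z = F ξ) → (∀ ζ : Q, B x ζ = G ζ) →
          ‖x‖ ≤ c₁ * (‖F‖ + ‖G‖) ∧ ‖z‖ ≤ c₂ * (‖F‖ + ‖G‖) :=
  brezzi_stability_general A B βA hβA hAcoer βB hβB hinfsup
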